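/- arXiv:2312.04196 — 5 statements merged into one kernel-verified Lean document; each statement's English description precedes it below -/
import Mathlib

section
/- Let G be a group generated by two elements x and y. Define a two-variable filtration G(m₁,m₂) for (m₁,m₂) ∈ ℕ² \ {(0,0)} by: G(1,0) is the normal closure of {x}, G(0,1) is the normal closure of {y}, and for |m| = m₁+m₂ ≥ 2, G(m) is the subgroup generated by all commutator subgroups [G(m'), G(m'')] with m' + m'' = m (componentwise, both m', m'' nonzero). Then for every (m₁,m₂) with m₁+m₂ ≥ 1, G(m₁,m₂) is contained in the (m₁+m₂)-th term of the lower central series of G (with the convention that the first term of the lower central series is G itself). -/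
/-!
Since `γ₁ = G`, the weight-one terms are trivially fine. For higher weight it suffices that the
lower central series is a filtration, `⁅γᵢ, γⱼ⁆ ≤ γᵢ₊ⱼ`, which follows by induction on `j` from
the three subgroups lemma.
-/

namespace Subgroup

variable {G : Type*} [Group G]

theorem commutator_commutator_le_of_rotate {A B C N : Subgroup G} [N.Normal]
    (h₁ : ⁅⁅B, C⁆, A⁆ ≤ N) (h₂ : ⁅⁅C, A⁆, B⁆ ≤ N) : ⁅⁅A, B⁆, C⁆ ≤ N := by
  have map_eq_bot {X Y Z : Subgroup G} :
      ⁅⁅X.map (QuotientGroup.mk' N), Y.map (QuotientGroup.mk' N)⁆, Z.map (QuotientGroup.mk' N)⁆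
        = ⊥ ↔ ⁅⁅X, Y⁆, Z⁆ ≤ N := by
    rw [← map_commutator, ← map_commutator, map_eq_bot_iff, QuotientGroup.ker_mk']
  exact map_eq_bot.mp <| commutator_commutator_eq_bot_of_rotate (map_eq_bot.mpr h₁)
    (map_eq_bot.mpr h₂)

theorem commutator_lowerCentralSeries_le (i j : ℕ) :
    ⁅(⊤ : Subgroup G).lowerCentralSeries i, (⊤ : Subgroup G).lowerCentralSeries j⁆ ≤
      (⊤ : Subgroup G).lowerCentralSeries (i + j + 1) := by
  induction j generalizing i with
  | zero => exact le_rfl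
  | succ j ih =>
    rw [lowerCentralSeries_succ, commutator_comm]
    apply commutator_commutator_le_of_rotate
    · rw [commutator_comm ⊤, ← lowerCentralSeries_succ]
      simpa only [add_right_comm i 1 j, add_assoc i j 1] using ih (i + 1)
    · exact commutator_mono (ih i) le_rfl

end Subgroup

theorem statement0_general {G : Type*} [Group G]
    (F : ℕ × ℕ → Subgroup G)
    (hrec : ∀ m : ℕ × ℕ, 2 ≤ m.1 + m.2 →
      F m = ⨆ (q : (ℕ × ℕ) × (ℕ × ℕ)) (_ : q.1 ≠ 0) (_ : q.2 ≠ 0) (_ : q.1 + q.2 = m),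
        ⁅F q.1, F q.2⁆) :
    ∀ m : ℕ × ℕ, 1 ≤ m.1 + m.2 → F m ≤ (⊤ : Subgroup G).lowerCentralSeries (m.1 + m.2 - 1) := by
  intro m hm
  induction hn : m.1 + m.2 using Nat.strong_induction_on generalizing m with
  | _ n ih =>
    obtain rfl | hn2 : n = 1 ∨ 2 ≤ n := by omega
    · exact le_top
    rw [hrec m (hn ▸ hn2)]
    refine iSup_le fun q => iSup_le fun hq₁ => iSup_le fun hq₂ => iSup_le fun hq => ?_
    have pos {a : ℕ × ℕ} (ha : a ≠ 0) : 1 ≤ a.1 + a.2 := by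
      contrapose! ha; ext <;> simp only [Prod.fst_zero, Prod.snd_zero] <;> omega
    have hw₁ := pos hq₁
    have hw₂ := pos hq₂
    have hsum : q.1.1 + q.1.2 + (q.2.1 + q.2.2) = n := by
      rw [← hn, ← hq, Prod.fst_add, Prod.snd_add]; ring
    calc ⁅F q.1, F q.2⁆
        ≤ ⁅(⊤ : Subgroup G).lowerCentralSeries (q.1.1 + q.1.2 - 1),
            (⊤ : Subgroup G).lowerCentralSeries (q.2.1 + q.2.2 - 1)⁆ :=
          Subgroup.commutator_mono (ih _ (by omega) q.1 hw₁ rfl)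
            (ih _ (by omega) q.2 hw₂ rfl)
      _ ≤ _ := Subgroup.commutator_lowerCentralSeries_le _ _
      _ = (⊤ : Subgroup G).lowerCentralSeries (n - 1) := by congr 1; omega

/-- the two-variable filtration `F (m₁, m₂)` on a group generated by
two elements `x, y` is contained in the lower central series:
`F (m₁, m₂) ≤ γ_{m₁+m₂}(G)` (with `γ₁ G = G`, i.e. `lowerCentralSeries G 0 = ⊤`). -/
theorem statement0 {G : Type*} [Group G] (x y : G)
    (hgen : Subgroup.closure {x, y} = ⊤)
    (F : ℕ × ℕ → Subgroup G)
    (h10 : F (1, 0) = Subgroup.normalClosure {x})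
    (h01 : F (0, 1) = Subgroup.normalClosure {y})
    (hrec : ∀ m : ℕ × ℕ, 2 ≤ m.1 + m.2 →
      F m = ⨆ (q : (ℕ × ℕ) × (ℕ × ℕ)) (_ : q.1 ≠ 0) (_ : q.2 ≠ 0) (_ : q.1 + q.2 = m),
        ⁅F q.1, F q.2⁆) :
    ∀ m : ℕ × ℕ, 1 ≤ m.1 + m.2 → F m ≤ (⊤ : Subgroup G).lowerCentralSeries (m.1 + m.2 - 1) :=
  statement0_general F hrec
end

section
/- Let G be a group generated by two elements x and y, with the two-variable filtration G(m₁,m₂) defined by: G(1,0) = normal closure of {x}, G(0,1) = normal closure of {y}, and G(m) = ⟨[G(m'),G(m'')] : m'+m''=m, m',m'' ≠ (0,0)⟩ for |m| ≥ 2. Then for every integer m ≥ 2, G(m,0) = G(m,1), and symmetrically G(0,m) = G(1,m). -/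
/-!
Induct on `m`. The group `F (m, 0)` is generated by commutators `⁅F (a, 0), F (b, 0)⁆` with
`a + b = m`; when `a ≥ 2` or `b ≥ 2` the induction hypothesis replaces that factor by
`F (·, 1)`, so the commutator lies in `F (m, 1)`. Only `m = 2` needs an idea: `⁅x, y⁆ ∈ F (1, 1)`
and `G = ⟨x, y⟩` make `x` central modulo `F (1, 1)`, so `F (1, 0) = ⟨x⟩ ⊔ F (1, 1)`; as
`F (1, 1)` commutes with `F (1, 0)` modulo `F (2, 1)`, the quotient of `F (1, 0)` by `F (2, 1)`
is abelian. The inclusion `F (m, 1) ≤ F (m, 0)` holds because every term shrinks when `(0, 1)`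
is added to its index, and the claim about `F (0, m)` is the first one for the swapped
filtration.
-/

open Subgroup
open scoped commutatorElement

section GroupTheory

variable {G : Type*} [Group G]

theorem Subgroup.normal_of_le_center {H : Subgroup G} (h : H ≤ center G) : H.Normal :=
  ⟨fun n hn g => by rwa [mem_center_iff.mp (h hn) g, mul_inv_cancel_right]⟩

theorem Subgroup.commutator_closure_singleton_sup_eq_bot {B : Subgroup G} (x : G)
    (h : ⁅B, closure {x} ⊔ B⁆ = ⊥) : ⁅closure {x} ⊔ B, closure {x} ⊔ B⁆ = ⊥ := by
  rw [commutator_eq_bot_iff_le_centralizer] at h ⊢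
  refine sup_le ?_ h
  rw [le_centralizer_iff]
  refine sup_le ?_ (le_centralizer_iff.mp (le_sup_left.trans (le_centralizer_iff.mp h)))
  rw [← zpowers_eq_closure]
  exact le_centralizer (H := zpowers x)

theorem Subgroup.commutator_closure_singleton_sup_le {B N : Subgroup G} [N.Normal] (x : G)
    (h : ⁅B, closure {x} ⊔ B⁆ ≤ N) : ⁅closure {x} ⊔ B, closure {x} ⊔ B⁆ ≤ N := by
  rw [← QuotientGroup.ker_mk' N, ← map_eq_bot_iff, map_commutator, map_sup,
    MonoidHom.map_closure, Set.image_singleton] at h ⊢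
  exact commutator_closure_singleton_sup_eq_bot _ h

theorem Subgroup.normalClosure_singleton_le_closure_sup {x y : G} (hgen : closure {x, y} = ⊤)
    {N : Subgroup G} [N.Normal] (h : ⁅x, y⁆ ∈ N) : normalClosure {x} ≤ closure {x} ⊔ N := by
  set π := QuotientGroup.mk' N
  have hcentral : π x ∈ center (G ⧸ N) := by
    refine Set.singleton_subset_iff.mp (centralizer_eq_top_iff_subset.mp ?_)
    rw [eq_top_iff, ← map_top_of_surjective π (QuotientGroup.mk'_surjective N), ← hgen,
      MonoidHom.map_closure, Set.image_pair, closure_le, Set.pair_subset_iff]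
    refine ⟨mem_centralizer_singleton_iff.mpr rfl, mem_centralizer_singleton_iff.mpr ?_⟩
    rw [eq_comm, ← commutatorElement_eq_one_iff_mul_comm, ← map_commutatorElement]
    exact (QuotientGroup.eq_one_iff _).mpr h
  have : (map π (closure {x})).Normal := normal_of_le_center <| by
    rwa [MonoidHom.map_closure, Set.image_singleton, closure_le, Set.singleton_subset_iff]
  calc normalClosure {x} ≤ comap π (map π (closure {x})) :=
        normalClosure_le_normal <|
          Set.singleton_subset_iff.mpr (le_comap_map _ _ (subset_closure rfl))
    _ = closure {x} ⊔ N := by rw [comap_map_eq, QuotientGroup.ker_mk']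

end GroupTheory

theorem Prod.ne_zero_iff_pos_fst_add_snd {p : ℕ × ℕ} : p ≠ 0 ↔ 0 < p.1 + p.2 := by
  obtain ⟨a, b⟩ := p
  simp only [ne_eq, Prod.mk_eq_zero]
  omega

theorem Prod.swap_ne_zero {α β : Type*} [Zero α] [Zero β] {p : α × β} (hp : p ≠ 0) :
    p.swap ≠ 0 := by
  rwa [Ne, Prod.swap_eq_iff_eq_swap, Prod.swap_zero]

theorem Prod.fst_add_snd_lt_of_add_eq {p q m : ℕ × ℕ} (hq : q ≠ 0) (h : p + q = m) :
    p.1 + p.2 < m.1 + m.2 := by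
  subst h
  rw [Prod.ne_zero_iff_pos_fst_add_snd] at hq
  simp only [Prod.fst_add, Prod.snd_add]
  omega

section Bifiltration

variable {G : Type*} [Group G]

def IsCommutatorBifiltration (F : ℕ × ℕ → Subgroup G) : Prop :=
  ∀ m : ℕ × ℕ, 2 ≤ m.1 + m.2 →
    F m = ⨆ (q : (ℕ × ℕ) × (ℕ × ℕ)) (_ : q.1 ≠ 0) (_ : q.2 ≠ 0) (_ : q.1 + q.2 = m),
      ⁅F q.1, F q.2⁆

namespace IsCommutatorBifiltration

variable {F : ℕ × ℕ → Subgroup G}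

theorem commutator_le (hF : IsCommutatorBifiltration F) {p q m : ℕ × ℕ} (hp : p ≠ 0)
    (hq : q ≠ 0) (hpq : p + q = m) : ⁅F p, F q⁆ ≤ F m := by
  have hm : 2 ≤ m.1 + m.2 := by
    have := Prod.fst_add_snd_lt_of_add_eq hq hpq
    rw [Prod.ne_zero_iff_pos_fst_add_snd] at hp
    omega
  rw [hF m hm]
  exact le_iSup_of_le (p, q) <| le_iSup_of_le hp <| le_iSup_of_le hq <| le_iSup_of_le hpq le_rfl

theorem le_of_forall_commutator_le (hF : IsCommutatorBifiltration F) {m : ℕ × ℕ}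
    (hm : 2 ≤ m.1 + m.2) {K : Subgroup G}
    (h : ∀ p q, p ≠ 0 → q ≠ 0 → p + q = m → ⁅F p, F q⁆ ≤ K) : F m ≤ K := by
  rw [hF m hm]
  exact iSup_le fun q => iSup_le fun hp => iSup_le fun hq => iSup_le fun hpq => h _ _ hp hq hpq

theorem comp_swap (hF : IsCommutatorBifiltration F) :
    IsCommutatorBifiltration (F ∘ Prod.swap) := by
  intro m hm
  apply le_antisymm
  · refine hF.le_of_forall_commutator_le (m := m.swap) (by simpa [add_comm] using hm)
      fun p q hp hq hpq => le_iSup_of_le (p.swap, q.swap) <|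
        le_iSup_of_le (Prod.swap_ne_zero hp) <| le_iSup_of_le (Prod.swap_ne_zero hq) <|
          le_iSup_of_le ?_ le_rfl
    rw [← Prod.swap_add, hpq, Prod.swap_swap]
  · exact iSup_le fun q => iSup_le fun hp => iSup_le fun hq => iSup_le fun hpq =>
      hF.commutator_le (Prod.swap_ne_zero hp) (Prod.swap_ne_zero hq)
        (by rw [← Prod.swap_add, hpq])

theorem normal (hF : IsCommutatorBifiltration F) (h10 : (F (1, 0)).Normal)
    (h01 : (F (0, 1)).Normal) (p : ℕ × ℕ) (hp : p ≠ 0) : (F p).Normal := by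
  induction h : p.1 + p.2 using Nat.strong_induction_on generalizing p with
  | _ n ih =>
    obtain ⟨a, b⟩ := p
    by_cases hab : 2 ≤ a + b
    · have hnormal (q : (ℕ × ℕ) × (ℕ × ℕ)) (hq₁ : q.1 ≠ 0) (hq₂ : q.2 ≠ 0)
          (hq : q.1 + q.2 = (a, b)) :
          ⁅F q.1, F q.2⁆.Normal := by
        have := ih _ (h ▸ Prod.fst_add_snd_lt_of_add_eq hq₂ hq) q.1 hq₁ rfl
        have := ih _ (h ▸ Prod.fst_add_snd_lt_of_add_eq hq₁ (add_comm q.1 q.2 ▸ hq)) q.2 hq₂ rfl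
        infer_instance
      rw [hF _ hab]
      exact @Subgroup.iSup_normal _ _ _ _ fun q => @Subgroup.iSup_normal _ _ _ _ fun hq₁ =>
        @Subgroup.iSup_normal _ _ _ _ fun hq₂ => @Subgroup.iSup_normal _ _ _ _ (hnormal q hq₁ hq₂)
    · rw [Prod.ne_zero_iff_pos_fst_add_snd] at hp
      obtain ⟨rfl, rfl⟩ | ⟨rfl, rfl⟩ : a = 1 ∧ b = 0 ∨ a = 0 ∧ b = 1 := by omega
      exacts [h10, h01]

theorem apply_add_zero_one_le (hF : IsCommutatorBifiltration F)
    (hN : ∀ p, p ≠ 0 → (F p).Normal) (p : ℕ × ℕ) (hp : p ≠ 0) : F (p + (0, 1)) ≤ F p := by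
  induction h : p.1 + p.2 using Nat.strong_induction_on generalizing p with
  | _ n ih =>
    have key (r s : ℕ × ℕ) (hr : r ≠ 0) (hrs : r + s = p + (0, 1)) (hs : 1 ≤ s.2) :
        ⁅F r, F s⁆ ≤ F p := by
      obtain ⟨s', rfl⟩ : ∃ s', s = s' + (0, 1) :=
        ⟨(s.1, s.2 - 1), Prod.ext (add_zero _).symm (Nat.sub_add_cancel hs).symm⟩
      rw [← add_assoc] at hrs
      obtain rfl := add_right_cancel hrs
      by_cases hs' : s' = 0
      · subst hs'
        have := hN r hr
        simpa using commutator_le_left (F r) (F (0, 1))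
      · calc ⁅F r, F (s' + (0, 1))⁆ ≤ ⁅F r, F s'⁆ :=
            commutator_mono le_rfl <|
              ih _ (h ▸ Prod.fst_add_snd_lt_of_add_eq hr (add_comm s' r)) s' hs' rfl
          _ ≤ F (r + s') := hF.commutator_le hr hs' rfl
    refine hF.le_of_forall_commutator_le ?_ fun r s hr hs hrs => ?_
    · rw [Prod.ne_zero_iff_pos_fst_add_snd] at hp
      simp only [Prod.fst_add, Prod.snd_add]
      omega
    · by_cases hs₁ : 1 ≤ s.2
      · exact key r s hr hrs hs₁
      · rw [commutator_comm]
        refine key s r hs (by rwa [add_comm]) ?_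
        have := congrArg Prod.snd hrs
        simp only [Prod.snd_add] at this
        omega

theorem commutator_apply_one_zero_le {x y : G} (hgen : closure {x, y} = ⊤)
    (hF : IsCommutatorBifiltration F) (h10 : F (1, 0) = normalClosure {x})
    (h01 : F (0, 1) = normalClosure {y}) (hN : ∀ p, p ≠ 0 → (F p).Normal) :
    ⁅F (1, 0), F (1, 0)⁆ ≤ F (2, 1) := by
  have hx : x ∈ F (1, 0) := h10 ▸ subset_normalClosure rfl
  have hy : y ∈ F (0, 1) := h01 ▸ subset_normalClosure rfl
  have := hN (1, 1) (by simp)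
  have := hN (2, 1) (by simp)
  have hdecomp : F (1, 0) = closure {x} ⊔ F (1, 1) := by
    refine le_antisymm ?_ (sup_le ?_ (hF.apply_add_zero_one_le hN (1, 0) (by simp)))
    · rw [h10]
      exact normalClosure_singleton_le_closure_sup hgen
        (hF.commutator_le (by simp) (by simp) rfl (commutator_mem_commutator hx hy))
    · exact (closure_le _).mpr (Set.singleton_subset_iff.mpr hx)
  rw [hdecomp]
  exact commutator_closure_singleton_sup_le x
    (hdecomp ▸ hF.commutator_le (p := (1, 1)) (q := (1, 0)) (by simp) (by simp) rfl)

theorem apply_mk_zero_eq_apply_mk_one {x y : G} (hgen : closure {x, y} = ⊤)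
    (hF : IsCommutatorBifiltration F) (h10 : F (1, 0) = normalClosure {x})
    (h01 : F (0, 1) = normalClosure {y}) (m : ℕ) (hm : 2 ≤ m) : F (m, 0) = F (m, 1) := by
  have hN := hF.normal (h10 ▸ normalClosure_normal) (h01 ▸ normalClosure_normal)
  induction m using Nat.strong_induction_on with
  | _ m ih =>
    refine le_antisymm ?_ <|
      hF.apply_add_zero_one_le hN (m, 0) (by simp only [ne_eq, Prod.mk_eq_zero]; omega)
    refine hF.le_of_forall_commutator_le (by simpa using hm) fun ⟨a, s⟩ ⟨b, t⟩ ha hb hab => ?_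
    obtain ⟨hsum, hst⟩ : a + b = m ∧ s + t = 0 := by simpa using hab
    obtain ⟨rfl, rfl⟩ : s = 0 ∧ t = 0 := by omega
    simp only [ne_eq, Prod.mk_eq_zero, and_true] at ha hb
    by_cases hb₂ : 2 ≤ b
    · rw [ih b (by omega) hb₂]
      exact hF.commutator_le (by simpa) (by simp) (Prod.ext hsum rfl)
    by_cases ha₂ : 2 ≤ a
    · rw [ih a (by omega) ha₂]
      exact hF.commutator_le (by simp) (by simpa) (Prod.ext hsum rfl)
    obtain ⟨rfl, rfl, rfl⟩ : a = 1 ∧ b = 1 ∧ m = 2 := by omega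
    exact hF.commutator_apply_one_zero_le hgen h10 h01 hN

end IsCommutatorBifiltration

end Bifiltration

/-- for the two-variable filtration on a group generated by `x, y`,
we have `F (m, 0) = F (m, 1)` and `F (0, m) = F (1, m)` for every `m ≥ 2`. -/
theorem statement1 {G : Type*} [Group G] (x y : G)
    (hgen : Subgroup.closure {x, y} = ⊤)
    (F : ℕ × ℕ → Subgroup G)
    (h10 : F (1, 0) = Subgroup.normalClosure {x})
    (h01 : F (0, 1) = Subgroup.normalClosure {y})
    (hrec : ∀ m : ℕ × ℕ, 2 ≤ m.1 + m.2 →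
      F m = ⨆ (q : (ℕ × ℕ) × (ℕ × ℕ)) (_ : q.1 ≠ 0) (_ : q.2 ≠ 0) (_ : q.1 + q.2 = m),
        ⁅F q.1, F q.2⁆) :
    ∀ m : ℕ, 2 ≤ m → F (m, 0) = F (m, 1) ∧ F (0, m) = F (1, m) := by
  have hF : IsCommutatorBifiltration F := hrec
  intro m hm
  exact ⟨hF.apply_mk_zero_eq_apply_mk_one hgen h10 h01 m hm,
    hF.comp_swap.apply_mk_zero_eq_apply_mk_one (by rwa [Set.pair_comm]) h01 h10 m hm⟩
end

section
/- Let G be a group generated by two elements x and y, with the two-variable filtration G(m₁,m₂) defined by: G(1,0) = normal closure of {x}, G(0,1) = normal closure of {y}, and G(m) = ⟨[G(m'),G(m'')] : m'+m''=m, m',m'' ≠ (0,0)⟩ for |m| ≥ 2. If (m₁,m₂) ≥ (n₁,n₂) componentwise (with both indices nonzero), then G(m₁,m₂) ⊆ G(n₁,n₂). -/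
/-!
The filtration is normal in every nonzero degree, since commutators of normal subgroups are
normal. For `n ≤ m` with `|m| ≥ 2`, each generating commutator `⁅F a, F b⁆` of `F m` is handled by
splitting `n = r + s` with `r ≤ a`, `s ≤ b`: if both parts are nonzero, induction gives
`⁅F a, F b⁆ ≤ ⁅F r, F s⁆ ≤ F n`; if one part vanishes, say `r = 0`, then `n ≤ b` and normality
gives `⁅F a, F b⁆ ≤ F b ≤ F n`. This avoids the exceptional degrees `(1, 0)` and `(0, 1)`, where
the recursion does not apply.
-/

namespace Prod

lemma eq_of_add_lt_two {m : ℕ × ℕ} (hm : m ≠ 0) (h : m.1 + m.2 < 2) : m = (1, 0) ∨ m = (0, 1) := by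
  obtain ⟨m₁, m₂⟩ := m
  simp only [ne_eq, mk_eq_zero, not_and_or, mk.injEq] at hm h ⊢
  omega

lemma eq_of_le_of_add_lt_two {m n : ℕ × ℕ} (hn : n ≠ 0) (hnm : n ≤ m) (h : m.1 + m.2 < 2) :
    n = m := by
  obtain ⟨m₁, m₂⟩ := m
  obtain ⟨n₁, n₂⟩ := n
  simp only [ne_eq, mk_eq_zero, not_and_or, mk_le_mk, mk.injEq] at hn hnm h ⊢
  omega

lemma two_le_add_of_add_eq {a b m : ℕ × ℕ} (ha : a ≠ 0) (hb : b ≠ 0) (h : a + b = m) :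
    2 ≤ m.1 + m.2 := by
  subst h
  obtain ⟨a₁, a₂⟩ := a
  obtain ⟨b₁, b₂⟩ := b
  simp only [ne_eq, mk_eq_zero, not_and_or, mk_add_mk] at ha hb ⊢
  omega

lemma exists_add_eq_of_le_add {n a b : ℕ × ℕ} (h : n ≤ a + b) :
    ∃ r s, r ≤ a ∧ s ≤ b ∧ r + s = n := by
  refine ⟨n ⊓ a, n - n ⊓ a, inf_le_right, ?_, add_tsub_cancel_of_le inf_le_left⟩
  obtain ⟨n₁, n₂⟩ := n
  obtain ⟨a₁, a₂⟩ := a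
  obtain ⟨b₁, b₂⟩ := b
  simp only [mk_le_mk, mk_add_mk, mk_inf_mk, mk_sub_mk] at h ⊢
  omega

lemma lt_of_add_eq {a b m : ℕ × ℕ} (hb : b ≠ 0) (h : a + b = m) : a < m :=
  h ▸ lt_add_of_pos_right a (pos_iff_ne_zero.mpr hb)

end Prod

section Filtration

variable {G : Type*} [Group G] {F : ℕ × ℕ → Subgroup G}
  (hrec : ∀ m : ℕ × ℕ, 2 ≤ m.1 + m.2 →
    F m = ⨆ (q : (ℕ × ℕ) × (ℕ × ℕ)) (_ : q.1 ≠ 0) (_ : q.2 ≠ 0) (_ : q.1 + q.2 = m),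
      ⁅F q.1, F q.2⁆)
include hrec

lemma commutator_le_of_add_eq {a b m : ℕ × ℕ} (ha : a ≠ 0) (hb : b ≠ 0) (h : a + b = m) :
    ⁅F a, F b⁆ ≤ F m := by
  rw [hrec m (Prod.two_le_add_of_add_eq ha hb h)]
  exact le_iSup_of_le (a, b) (le_iSup_of_le ha (le_iSup_of_le hb (le_iSup_of_le h le_rfl)))

lemma le_of_forall_add_eq {m : ℕ × ℕ} {K : Subgroup G} (hm : 2 ≤ m.1 + m.2)
    (h : ∀ a b : ℕ × ℕ, a ≠ 0 → b ≠ 0 → a + b = m → ⁅F a, F b⁆ ≤ K) : F m ≤ K := by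
  rw [hrec m hm]
  exact iSup_le fun q ↦ iSup_le fun hq₁ ↦ iSup_le fun hq₂ ↦ iSup_le fun hq ↦ h q.1 q.2 hq₁ hq₂ hq

lemma normal_of_ne_zero (h₁₀ : (F (1, 0)).Normal) (h₀₁ : (F (0, 1)).Normal) :
    ∀ m : ℕ × ℕ, m ≠ 0 → (F m).Normal := by
  intro m
  induction m using WellFoundedLT.induction with
  | ind m ih =>
    intro hm
    rcases lt_or_ge (m.1 + m.2) 2 with hsmall | hlarge
    · rcases Prod.eq_of_add_lt_two hm hsmall with rfl | rfl <;> assumption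
    · rw [hrec m hlarge]
      refine @Subgroup.iSup_normal _ _ _ _ fun q ↦ @Subgroup.iSup_normal _ _ _ _ fun hq₁ ↦
        @Subgroup.iSup_normal _ _ _ _ fun hq₂ ↦ @Subgroup.iSup_normal _ _ _ _ fun hq ↦ ?_
      have := ih q.1 (Prod.lt_of_add_eq hq₂ hq) hq₁
      have := ih q.2 (Prod.lt_of_add_eq hq₁ (add_comm q.1 q.2 ▸ hq)) hq₂
      exact Subgroup.commutator_normal _ _

lemma antitoneOn_ne_zero (h₁₀ : (F (1, 0)).Normal) (h₀₁ : (F (0, 1)).Normal) :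
    AntitoneOn F {m | m ≠ 0} := by
  have hnormal := normal_of_ne_zero hrec h₁₀ h₀₁
  intro n hn m hm hnm
  induction m using WellFoundedLT.induction generalizing n with
  | ind m ih =>
    rcases lt_or_ge (m.1 + m.2) 2 with hsmall | hlarge
    · rw [Prod.eq_of_le_of_add_lt_two hn hnm hsmall]
    refine le_of_forall_add_eq hrec hlarge fun a b ha hb hab ↦ ?_
    have := hnormal a ha
    have := hnormal b hb
    have ha_lt : a < m := Prod.lt_of_add_eq hb hab
    have hb_lt : b < m := Prod.lt_of_add_eq ha (add_comm a b ▸ hab)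
    obtain ⟨r, s, hra, hsb, hrs⟩ := Prod.exists_add_eq_of_le_add (hab ▸ hnm)
    rcases eq_or_ne r 0 with rfl | hr
    · rw [zero_add] at hrs
      exact (Subgroup.commutator_le_right _ _).trans (ih b hb_lt hn hb (hrs ▸ hsb))
    rcases eq_or_ne s 0 with rfl | hs
    · rw [add_zero] at hrs
      exact (Subgroup.commutator_le_left _ _).trans (ih a ha_lt hn ha (hrs ▸ hra))
    calc ⁅F a, F b⁆ ≤ ⁅F r, F s⁆ :=
          Subgroup.commutator_mono (ih a ha_lt hr ha hra) (ih b hb_lt hs hb hsb)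
      _ ≤ F n := commutator_le_of_add_eq hrec hr hs hrs

end Filtration

theorem statement2_general {G : Type*} [Group G] (x y : G)
    (F : ℕ × ℕ → Subgroup G)
    (h10 : F (1, 0) = Subgroup.normalClosure {x})
    (h01 : F (0, 1) = Subgroup.normalClosure {y})
    (hrec : ∀ m : ℕ × ℕ, 2 ≤ m.1 + m.2 →
      F m = ⨆ (q : (ℕ × ℕ) × (ℕ × ℕ)) (_ : q.1 ≠ 0) (_ : q.2 ≠ 0) (_ : q.1 + q.2 = m),
        ⁅F q.1, F q.2⁆) :
    ∀ m n : ℕ × ℕ, m ≠ 0 → n ≠ 0 → n ≤ m → F m ≤ F n :=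
  fun _ _ hm hn hnm ↦ antitoneOn_ne_zero hrec (h10 ▸ Subgroup.normalClosure_normal)
    (h01 ▸ Subgroup.normalClosure_normal) hn hm hnm

/-- the two-variable filtration on a group generated by `x, y` is
antitone with respect to the componentwise order on nonzero indices:
if `n ≤ m` componentwise (both nonzero), then `F m ≤ F n`. -/
theorem statement2 {G : Type*} [Group G] (x y : G)
    (hgen : Subgroup.closure {x, y} = ⊤)
    (F : ℕ × ℕ → Subgroup G)
    (h10 : F (1, 0) = Subgroup.normalClosure {x})
    (h01 : F (0, 1) = Subgroup.normalClosure {y})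
    (hrec : ∀ m : ℕ × ℕ, 2 ≤ m.1 + m.2 →
      F m = ⨆ (q : (ℕ × ℕ) × (ℕ × ℕ)) (_ : q.1 ≠ 0) (_ : q.2 ≠ 0) (_ : q.1 + q.2 = m),
        ⁅F q.1, F q.2⁆) :
    ∀ m n : ℕ × ℕ, m ≠ 0 → n ≠ 0 → n ≤ m → F m ≤ F n :=
  statement2_general x y F h10 h01 hrec
end

section
/- Let G be a group generated by two elements x and y, with the two-variable filtration G(m₁,m₂) (G(1,0) = normal closure of {x}, G(0,1) = normal closure of {y}, and G(m) = ⟨[G(m'),G(m'')] : m'+m''=m⟩ for |m| ≥ 2). Fix m = (m₁,m₂) with |m| ≥ 1, and let f : G → G be an automorphism such that for k ∈ {(1,0),(0,1)} and every g ∈ G(k), one has f(g)·g⁻¹ ∈ G(k + m). Then for every n = (n₁,n₂) with |n| ≥ 1 and every g ∈ G(n), one has f(g)·g⁻¹ ∈ G(n + m). In other words, if f acts trivially on G(1,0)/G(m+(1,0)) and on G(0,1)/G(m+(0,1)), then f acts trivially on G(n)/G(n+m) for all n. -/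
/-!
For `g ∈ F p` write `f g = a g` with `a ∈ F (p + m)`. If `u ∈ F p`, `v ∈ F q` and `p + q = n`,
then, since `⁅F s, F t⁆ ≤ F (s + t)` and the filtration is decreasing, the correction terms of `u`
and `v` commute modulo `F (n + m)` with `u`, `v`, `f v` and `⁅u, v⁆`; this forces
`f ⁅u, v⁆ ≡ ⁅u, v⁆`. As the elements fixed modulo `F (n + m)` form a subgroup, induction on `n`
carries the hypothesis from `F (1, 0)` and `F (0, 1)` to every `F n`.
-/

open scoped commutatorElement

section CommutatorIdentities

variable {G : Type*} [Group G]

theorem commutatorElement_mul_left_of_commute {a u h : G} (ha : Commute a h)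
    (hc : Commute a ⁅u, h⁆) : ⁅a * u, h⁆ = ⁅u, h⁆ :=
  calc ⁅a * u, h⁆ = a * ⁅u, h⁆ * (h * a⁻¹ * h⁻¹) := by group
    _ = ⁅u, h⁆ * (a * h * a⁻¹ * h⁻¹) := by rw [hc.eq]; group
    _ = ⁅u, h⁆ := by rw [ha.eq]; group

theorem commutatorElement_mul_right_of_commute {b u v : G} (hb : Commute b u)
    (hc : Commute b ⁅u, v⁆) : ⁅u, b * v⁆ = ⁅u, v⁆ := by
  rw [← commutatorElement_inv, commutatorElement_mul_left_of_commute hb, commutatorElement_inv]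
  rwa [← commutatorElement_inv, Commute.inv_right_iff]

theorem QuotientGroup.commute_mk'_of_commutatorElement_mem {N : Subgroup G} [N.Normal]
    {a b : G} (h : ⁅a, b⁆ ∈ N) : Commute (QuotientGroup.mk' N a) (QuotientGroup.mk' N b) := by
  rw [← commutatorElement_eq_one_iff_commute, ← map_commutatorElement, QuotientGroup.mk'_apply,
    QuotientGroup.eq_one_iff]
  exact h

end CommutatorIdentities

theorem Prod.nat_eq_zero_or_eq_basis_or_two_le (k : ℕ × ℕ) :
    k = 0 ∨ k = (1, 0) ∨ k = (0, 1) ∨ 2 ≤ k.1 + k.2 := by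
  obtain ⟨_ | _ | a, _ | _ | b⟩ := k <;> simp <;> omega

structure IsCommutatorFiltration {G : Type*} [Group G] (F : ℕ × ℕ → Subgroup G) : Prop where
  normal_fst : (F (1, 0)).Normal
  normal_snd : (F (0, 1)).Normal
  eq_iSup : ∀ m : ℕ × ℕ, 2 ≤ m.1 + m.2 →
    F m = ⨆ (q : (ℕ × ℕ) × (ℕ × ℕ)) (_ : q.1 ≠ 0) (_ : q.2 ≠ 0) (_ : q.1 + q.2 = m),
      ⁅F q.1, F q.2⁆

namespace IsCommutatorFiltration

variable {G : Type*} [Group G] {F : ℕ × ℕ → Subgroup G}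

theorem le_iff (hF : IsCommutatorFiltration F) {k : ℕ × ℕ} (hk : 2 ≤ k.1 + k.2)
    {H : Subgroup G} :
    F k ≤ H ↔ ∀ p q : ℕ × ℕ, p ≠ 0 → q ≠ 0 → p + q = k → ⁅F p, F q⁆ ≤ H := by
  simp only [hF.eq_iSup k hk, iSup_le_iff]
  exact ⟨fun h p q => h (p, q), fun h q => h q.1 q.2⟩

theorem commutator_le (hF : IsCommutatorFiltration F) {p q : ℕ × ℕ} (hp : p ≠ 0) (hq : q ≠ 0) :
    ⁅F p, F q⁆ ≤ F (p + q) := by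
  refine (hF.le_iff ?_).1 le_rfl p q hp hq rfl
  simp only [ne_eq, Prod.ext_iff, Prod.fst_zero, Prod.snd_zero, Prod.fst_add, Prod.snd_add] at *
  omega

theorem normal (hF : IsCommutatorFiltration F) {k : ℕ × ℕ} (hk : k ≠ 0) : (F k).Normal := by
  induction k using WellFoundedLT.induction with
  | _ k ih =>
    obtain rfl | rfl | rfl | hk2 := k.nat_eq_zero_or_eq_basis_or_two_le
    · exact absurd rfl hk
    · exact hF.normal_fst
    · exact hF.normal_snd
    rw [hF.eq_iSup k hk2]
    refine @Subgroup.iSup_normal _ _ _ _ fun q => @Subgroup.iSup_normal _ _ _ _ fun hq₁ =>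
      @Subgroup.iSup_normal _ _ _ _ fun hq₂ => @Subgroup.iSup_normal _ _ _ _ fun hsum => ?_
    have := ih q.1 (hsum ▸ lt_add_of_pos_right _ (pos_iff_ne_zero.2 hq₂)) hq₁
    have := ih q.2 (hsum ▸ lt_add_of_pos_left _ (pos_iff_ne_zero.2 hq₁)) hq₂
    infer_instance

theorem antitone (hF : IsCommutatorFiltration F) {p q : ℕ × ℕ} (hp : p ≠ 0) (hpq : p ≤ q) :
    F q ≤ F p := by
  induction q using WellFoundedLT.induction generalizing p with
  | _ q ih =>
    obtain rfl | hne := eq_or_ne p q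
    · exact le_rfl
    have hq2 : 2 ≤ q.1 + q.2 := by
      simp only [ne_eq, Prod.ext_iff, Prod.le_def, Prod.fst_zero, Prod.snd_zero] at *
      omega
    refine (hF.le_iff hq2).2 fun q₁ q₂ hq₁ hq₂ hsum => ?_
    have lt₁ : q₁ < q := hsum ▸ lt_add_of_pos_right _ (pos_iff_ne_zero.2 hq₂)
    have lt₂ : q₂ < q := hsum ▸ lt_add_of_pos_left _ (pos_iff_ne_zero.2 hq₁)
    -- `p = p₁ + p₂` with `p₁ ≤ q₁`, `p₂ ≤ q₂`; if one part vanishes, normality suffices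
    set p₁ : ℕ × ℕ := (min p.1 q₁.1, min p.2 q₁.2)
    set p₂ : ℕ × ℕ := (p.1 - p₁.1, p.2 - p₁.2)
    simp only [Prod.ext_iff, Prod.le_def, Prod.fst_add, Prod.snd_add] at hpq hsum
    by_cases h₁ : p₁ = 0
    · have := hF.normal hq₂
      refine (Subgroup.commutator_le_right _ _).trans (ih q₂ lt₂ hp ?_)
      simp only [p₁, Prod.ext_iff, Prod.le_def, Prod.fst_zero, Prod.snd_zero] at h₁ ⊢
      omega
    by_cases h₂ : p₂ = 0
    · have := hF.normal hq₁
      refine (Subgroup.commutator_le_left _ _).trans (ih q₁ lt₁ hp ?_)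
      simp only [p₂, p₁, Prod.ext_iff, Prod.le_def, Prod.fst_zero, Prod.snd_zero] at h₂ ⊢
      omega
    have hp₁₂ : p₁ + p₂ = p := by
      simp only [p₂, p₁, Prod.ext_iff, Prod.fst_add, Prod.snd_add]
      omega
    calc ⁅F q₁, F q₂⁆ ≤ ⁅F p₁, F p₂⁆ :=
          Subgroup.commutator_mono (ih q₁ lt₁ h₁ (by simp [p₁, Prod.le_def]))
            (ih q₂ lt₂ h₂ (by simp only [p₂, p₁, Prod.le_def]; omega))
      _ ≤ F p := hp₁₂ ▸ hF.commutator_le h₁ h₂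

theorem commutatorElement_mem (hF : IsCommutatorFiltration F) {p q r : ℕ × ℕ} (hp : p ≠ 0)
    (hq : q ≠ 0) (hr : r ≠ 0) (hrpq : r ≤ p + q) {u v : G} (hu : u ∈ F p) (hv : v ∈ F q) :
    ⁅u, v⁆ ∈ F r :=
  hF.antitone hr hrpq (hF.commutator_le hp hq (Subgroup.commutator_mem_commutator hu hv))

theorem map_commutatorElement_mul_inv_mem (hF : IsCommutatorFiltration F) (f : G →* G)
    {m p q : ℕ × ℕ} (hp : p ≠ 0) (hq : q ≠ 0) {u v : G} (hu : u ∈ F p) (hv : v ∈ F q)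
    (hfu : f u * u⁻¹ ∈ F (p + m)) (hfv : f v * v⁻¹ ∈ F (q + m)) :
    f ⁅u, v⁆ * ⁅u, v⁆⁻¹ ∈ F (p + q + m) := by
  have hpq : p + q ≠ 0 := add_ne_zero.2 (Or.inl hp)
  have hpm : p + m ≠ 0 := add_ne_zero.2 (Or.inl hp)
  have hqm : q + m ≠ 0 := add_ne_zero.2 (Or.inl hq)
  have hN : p + q + m ≠ 0 := add_ne_zero.2 (Or.inl hpq)
  have := hF.normal hN
  set π := QuotientGroup.mk' (F (p + q + m))
  have commute_mod {s t : ℕ × ℕ} {g h : G} (hs : s ≠ 0) (ht : t ≠ 0)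
      (hle : p + q + m ≤ s + t) (hg : g ∈ F s) (hh : h ∈ F t) : Commute (π g) (π h) :=
    QuotientGroup.commute_mk'_of_commutatorElement_mem
      (hF.commutatorElement_mem hs ht hN hle hg hh)
  set a := f u * u⁻¹
  set b := f v * v⁻¹
  have hfu' : f u = a * u := (inv_mul_cancel_right _ _).symm
  have hfv' : f v = b * v := (inv_mul_cancel_right _ _).symm
  have hfv_mem : f v ∈ F q := hfv' ▸ mul_mem (hF.antitone hq le_self_add hfv) hv
  have h₁ : Commute (π a) (π (f v)) :=
    commute_mod hpm hq (by simp only [Prod.le_def, Prod.fst_add, Prod.snd_add]; omega)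
      hfu hfv_mem
  have h₂ : Commute (π a) ⁅π u, π (f v)⁆ := by
    rw [← map_commutatorElement]
    exact commute_mod hpm hpq (by simp only [Prod.le_def, Prod.fst_add, Prod.snd_add]; omega)
      hfu (hF.commutatorElement_mem hp hq hpq le_rfl hu hfv_mem)
  have h₃ : Commute (π b) (π u) :=
    commute_mod hqm hp (by simp only [Prod.le_def, Prod.fst_add, Prod.snd_add]; omega)
      hfv hu
  have h₄ : Commute (π b) ⁅π u, π v⁆ := by
    rw [← map_commutatorElement]
    exact commute_mod hqm hpq (by simp only [Prod.le_def, Prod.fst_add, Prod.snd_add]; omega)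
      hfv (hF.commutatorElement_mem hp hq hpq le_rfl hu hv)
  suffices π (f ⁅u, v⁆) = π ⁅u, v⁆ by
    rwa [QuotientGroup.mk'_apply, QuotientGroup.mk'_apply, QuotientGroup.eq_iff_div_mem,
      div_eq_mul_inv] at this
  calc π (f ⁅u, v⁆) = ⁅π a * π u, π (f v)⁆ := by
        rw [map_commutatorElement, map_commutatorElement, hfu', map_mul]
    _ = ⁅π u, π b * π v⁆ := by
        rw [commutatorElement_mul_left_of_commute h₁ h₂, hfv', map_mul]
    _ = π ⁅u, v⁆ := by
        rw [commutatorElement_mul_right_of_commute h₃ h₄, map_commutatorElement]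

theorem map_mul_inv_mem (hF : IsCommutatorFiltration F) (f : G →* G) (m : ℕ × ℕ)
    (h₁₀ : ∀ g ∈ F (1, 0), f g * g⁻¹ ∈ F ((1, 0) + m))
    (h₀₁ : ∀ g ∈ F (0, 1), f g * g⁻¹ ∈ F ((0, 1) + m)) {n : ℕ × ℕ} (hn : n ≠ 0) :
    ∀ g ∈ F n, f g * g⁻¹ ∈ F (n + m) := by
  induction n using WellFoundedLT.induction with
  | _ n ih =>
    obtain rfl | rfl | rfl | hn2 := n.nat_eq_zero_or_eq_basis_or_two_le
    · exact absurd rfl hn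
    · exact h₁₀
    · exact h₀₁
    have := hF.normal (add_ne_zero.2 (Or.inl hn) : n + m ≠ 0)
    let S := MonoidHom.eqLocus ((QuotientGroup.mk' (F (n + m))).comp f) (QuotientGroup.mk' _)
    have mem_S (g : G) : g ∈ S ↔ f g * g⁻¹ ∈ F (n + m) := by
      rw [← div_eq_mul_inv, ← QuotientGroup.eq_iff_div_mem]
      rfl
    suffices F n ≤ S from fun g hg => (mem_S g).1 (this hg)
    refine (hF.le_iff hn2).2 fun p q hp hq hsum => Subgroup.commutator_le.2 fun u hu v hv => ?_
    subst hsum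
    exact (mem_S _).2 <| hF.map_commutatorElement_mul_inv_mem f hp hq hu hv
      (ih p (lt_add_of_pos_right _ (pos_iff_ne_zero.2 hq)) hp u hu)
      (ih q (lt_add_of_pos_left _ (pos_iff_ne_zero.2 hp)) hq v hv)

end IsCommutatorFiltration

theorem statement13_general {G : Type*} [Group G] (x y : G)
    (F : ℕ × ℕ → Subgroup G)
    (h10 : F (1, 0) = Subgroup.normalClosure {x})
    (h01 : F (0, 1) = Subgroup.normalClosure {y})
    (hrec : ∀ m : ℕ × ℕ, 2 ≤ m.1 + m.2 →
      F m = ⨆ (q : (ℕ × ℕ) × (ℕ × ℕ)) (_ : q.1 ≠ 0) (_ : q.2 ≠ 0) (_ : q.1 + q.2 = m),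
        ⁅F q.1, F q.2⁆)
    (m : ℕ × ℕ)
    (f : G ≃* G)
    (hf10 : ∀ g ∈ F (1, 0), f g * g⁻¹ ∈ F ((1, 0) + m))
    (hf01 : ∀ g ∈ F (0, 1), f g * g⁻¹ ∈ F ((0, 1) + m)) :
    ∀ n : ℕ × ℕ, n ≠ 0 → ∀ g ∈ F n, f g * g⁻¹ ∈ F (n + m) := by
  have hF : IsCommutatorFiltration F :=
    ⟨h10 ▸ Subgroup.normalClosure_normal, h01 ▸ Subgroup.normalClosure_normal, hrec⟩
  exact fun _ hn => hF.map_mul_inv_mem f.toMonoidHom m hf10 hf01 hn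

/-- if an automorphism `f` of a group generated by `x, y` (preserving
the two-variable filtration) acts trivially on `F(1,0)/F((1,0)+m)` and on
`F(0,1)/F((0,1)+m)`, then it acts trivially on `F(n)/F(n+m)` for every nonzero `n`. -/
theorem statement13 {G : Type*} [Group G] (x y : G)
    (hgen : Subgroup.closure {x, y} = ⊤)
    (F : ℕ × ℕ → Subgroup G)
    (h10 : F (1, 0) = Subgroup.normalClosure {x})
    (h01 : F (0, 1) = Subgroup.normalClosure {y})
    (hrec : ∀ m : ℕ × ℕ, 2 ≤ m.1 + m.2 →
      F m = ⨆ (q : (ℕ × ℕ) × (ℕ × ℕ)) (_ : q.1 ≠ 0) (_ : q.2 ≠ 0) (_ : q.1 + q.2 = m),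
        ⁅F q.1, F q.2⁆)
    (m : ℕ × ℕ) (hm : m ≠ 0)
    (f : G ≃* G)
    (hpres : ∀ n : ℕ × ℕ, n ≠ 0 → ∀ g ∈ F n, f g ∈ F n)
    (hf10 : ∀ g ∈ F (1, 0), f g * g⁻¹ ∈ F ((1, 0) + m))
    (hf01 : ∀ g ∈ F (0, 1), f g * g⁻¹ ∈ F ((0, 1) + m)) :
    ∀ n : ℕ × ℕ, n ≠ 0 → ∀ g ∈ F n, f g * g⁻¹ ∈ F (n + m) :=
  statement13_general x y F h10 h01 hrec m f hf10 hf01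
end

section
/- Let G be a group generated by two elements x and y, with two-variable filtration G(m₁,m₂) as above. Let f : G → G be an automorphism with f(x)·x⁻¹ ∈ G(m + (1,0)) and f(y)·y⁻¹ ∈ G(m + (0,1)), for a fixed m = (m₁,m₂) with |m| ≥ 1. Then f(g)·g⁻¹ ∈ G(m + (1,0)) for every g in G(1,0) of the form g = yⁿ x y⁻ⁿ (n ∈ ℤ); more precisely, f(yⁿ x y⁻ⁿ)·(yⁿ x⁻¹ y⁻ⁿ) ∈ G(m + (1,0)) for every integer n. -/
/-!
By induction on the index, every `F a` with `a ≠ 0` is normal, `F` is antitone, and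
`⁅F a, F b⁆ ≤ F (a + b)`. Put `u = f(y)⁻ⁿ yⁿ`; it lies in `F (m + (0, 1)) ≤ F m`, so
`⁅u, x⁆ ∈ ⁅F m, F (1, 0)⁆ ≤ F (m + (1, 0))`. Modulo this normal subgroup `f x ≡ x` and `u`
commutes with `x`, hence `f(y)ⁿ f(x) f(y)⁻ⁿ ≡ f(y)ⁿ x f(y)⁻ⁿ = f(y)ⁿ u x u⁻¹ f(y)⁻ⁿ ≡ yⁿ x y⁻ⁿ`.
-/

open scoped commutatorElement

namespace Prod

theorem eq_or_eq_or_two_le_add {a : ℕ × ℕ} (ha : a ≠ 0) :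
    a = (1, 0) ∨ a = (0, 1) ∨ 2 ≤ a.1 + a.2 := by
  rcases a with ⟨a₁, a₂⟩
  simp only [ne_eq, Prod.mk_eq_zero, Prod.mk.injEq] at ha ⊢
  omega

theorem one_le_add_of_ne_zero {a : ℕ × ℕ} (ha : a ≠ 0) : 1 ≤ a.1 + a.2 := by
  rcases a with ⟨a₁, a₂⟩
  simp only [ne_eq, Prod.mk_eq_zero] at ha
  omega

theorem eq_of_le_of_ne_zero_of_add_lt_two {a b : ℕ × ℕ} (hb : b ≠ 0) (hba : b ≤ a)
    (ha : a.1 + a.2 < 2) : b = a := by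
  simp only [ne_eq, Prod.le_def, Prod.ext_iff, Prod.fst_zero, Prod.snd_zero] at *
  omega

theorem exists_add_eq_of_le_add_s16 {b c d : ℕ × ℕ} (h : b ≤ c + d) (hc : ¬b ≤ c) (hd : ¬b ≤ d) :
    ∃ b₁ b₂ : ℕ × ℕ, b₁ ≠ 0 ∧ b₂ ≠ 0 ∧ b₁ ≤ c ∧ b₂ ≤ d ∧ b₁ + b₂ = b := by
  refine ⟨(min b.1 c.1, min b.2 c.2), (b.1 - min b.1 c.1, b.2 - min b.2 c.2), ?_, ?_, ?_, ?_, ?_⟩ <;>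
    simp only [Prod.le_def, ne_eq, Prod.fst_add, Prod.snd_add, Prod.ext_iff,
      Prod.mk_add_mk, Prod.fst_zero, Prod.snd_zero] at * <;>
    omega

end Prod

/-- The paper's `G(m)`, with the normal closures `G(1,0)`, `G(0,1)` weakened to arbitrary
normal subgroups. -/
structure IsCommutatorFiltration_s16 {G : Type*} [Group G] (F : ℕ × ℕ → Subgroup G) : Prop where
  normal_one_zero : (F (1, 0)).Normal
  normal_zero_one : (F (0, 1)).Normal
  eq_iSup : ∀ m : ℕ × ℕ, 2 ≤ m.1 + m.2 →
    F m = ⨆ (q : (ℕ × ℕ) × (ℕ × ℕ)) (_ : q.1 ≠ 0) (_ : q.2 ≠ 0) (_ : q.1 + q.2 = m),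
      ⁅F q.1, F q.2⁆

namespace IsCommutatorFiltration_s16

variable {G : Type*} [Group G] {F : ℕ × ℕ → Subgroup G}

theorem commutator_le_s16 (hF : IsCommutatorFiltration_s16 F) {a b : ℕ × ℕ} (ha : a ≠ 0) (hb : b ≠ 0) :
    ⁅F a, F b⁆ ≤ F (a + b) := by
  have h2 : 2 ≤ (a + b).1 + (a + b).2 := by
    have := Prod.one_le_add_of_ne_zero ha
    have := Prod.one_le_add_of_ne_zero hb
    simp only [Prod.fst_add, Prod.snd_add]
    omega
  rw [hF.eq_iSup _ h2]
  exact le_iSup_of_le (a, b) <| le_iSup_of_le ha <| le_iSup_of_le hb <| le_iSup_of_le rfl le_rfl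

theorem le_of_forall_commutator_le (hF : IsCommutatorFiltration_s16 F) {a : ℕ × ℕ}
    (ha : 2 ≤ a.1 + a.2) {H : Subgroup G}
    (hH : ∀ b c : ℕ × ℕ, b ≠ 0 → c ≠ 0 → b + c = a → ⁅F b, F c⁆ ≤ H) : F a ≤ H := by
  rw [hF.eq_iSup a ha]
  exact iSup_le fun q => iSup_le fun hq₁ => iSup_le fun hq₂ => iSup_le fun hq => hH _ _ hq₁ hq₂ hq

theorem normal_s16 (hF : IsCommutatorFiltration_s16 F) {a : ℕ × ℕ} (ha : a ≠ 0) : (F a).Normal := by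
  induction a using WellFoundedLT.induction with
  | _ a ih =>
  rcases Prod.eq_or_eq_or_two_le_add ha with rfl | rfl | h2
  · exact hF.normal_one_zero
  · exact hF.normal_zero_one
  · rw [hF.eq_iSup a h2]
    refine @Subgroup.iSup_normal _ _ _ _ fun q => @Subgroup.iSup_normal _ _ _ _ fun hq₁ =>
      @Subgroup.iSup_normal _ _ _ _ fun hq₂ => @Subgroup.iSup_normal _ _ _ _ fun hq => ?_
    have := ih q.1 (hq ▸ lt_add_of_pos_right _ (pos_iff_ne_zero.mpr hq₂)) hq₁
    have := ih q.2 (hq ▸ lt_add_of_pos_left _ (pos_iff_ne_zero.mpr hq₁)) hq₂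
    exact Subgroup.commutator_normal _ _

theorem antitone_s16 (hF : IsCommutatorFiltration_s16 F) {a b : ℕ × ℕ} (hb : b ≠ 0) (hba : b ≤ a) :
    F a ≤ F b := by
  induction a using WellFoundedLT.induction generalizing b with
  | _ a ih =>
  by_cases h2 : 2 ≤ a.1 + a.2
  swap
  · obtain rfl : b = a := Prod.eq_of_le_of_ne_zero_of_add_lt_two hb hba (not_le.mp h2)
    exact le_rfl
  refine hF.le_of_forall_commutator_le h2 fun c d hc hd hcd => ?_
  have hca : c < a := hcd ▸ lt_add_of_pos_right _ (pos_iff_ne_zero.mpr hd)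
  have hda : d < a := hcd ▸ lt_add_of_pos_left _ (pos_iff_ne_zero.mpr hc)
  by_cases hbc : b ≤ c
  · have := hF.normal_s16 hc
    exact (Subgroup.commutator_le_left _ _).trans (ih c hca hb hbc)
  by_cases hbd : b ≤ d
  · have := hF.normal_s16 hd
    exact (Subgroup.commutator_le_right _ _).trans (ih d hda hb hbd)
  obtain ⟨b₁, b₂, hb₁, hb₂, hb₁c, hb₂d, rfl⟩ := Prod.exists_add_eq_of_le_add_s16 (hcd ▸ hba) hbc hbd
  exact (Subgroup.commutator_mono (ih c hca hb₁ hb₁c) (ih d hda hb₂ hb₂d)).trans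
    (hF.commutator_le_s16 hb₁ hb₂)

end IsCommutatorFiltration_s16

namespace Subgroup

variable {G : Type*} [Group G]

theorem zpow_inv_mul_zpow_mem {M : Subgroup G} [M.Normal] {a b : G} (h : a * b⁻¹ ∈ M)
    (n : ℤ) : (a ^ n)⁻¹ * b ^ n ∈ M := by
  rw [← QuotientGroup.eq, QuotientGroup.mk_zpow, QuotientGroup.mk_zpow,
    QuotientGroup.eq_iff_div_mem.mpr (by rwa [div_eq_mul_inv])]

theorem conj_mul_conj_inv_mem {N : Subgroup G} [hN : N.Normal] {a b x x' : G}
    (hx : x' * x⁻¹ ∈ N) (hab : ⁅a⁻¹ * b, x⁆ ∈ N) : a * x' * a⁻¹ * (b * x⁻¹ * b⁻¹) ∈ N := by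
  have key : a * x' * a⁻¹ * (b * x⁻¹ * b⁻¹) =
      a * (x' * x⁻¹) * a⁻¹ * (a * ⁅a⁻¹ * b, x⁆⁻¹ * a⁻¹) := by
    simp only [commutatorElement_def]
    group
  rw [key]
  exact mul_mem (hN.conj_mem _ hx a) (hN.conj_mem _ (inv_mem hab) a)

end Subgroup

theorem statement16_general {G : Type*} [Group G] (x y : G)
    (F : ℕ × ℕ → Subgroup G)
    (h10 : F (1, 0) = Subgroup.normalClosure {x})
    (h01 : F (0, 1) = Subgroup.normalClosure {y})
    (hrec : ∀ m : ℕ × ℕ, 2 ≤ m.1 + m.2 →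
      F m = ⨆ (q : (ℕ × ℕ) × (ℕ × ℕ)) (_ : q.1 ≠ 0) (_ : q.2 ≠ 0) (_ : q.1 + q.2 = m),
        ⁅F q.1, F q.2⁆)
    (m : ℕ × ℕ) (hm : m ≠ 0)
    (f : G ≃* G)
    (hx : f x * x⁻¹ ∈ F (m + (1, 0)))
    (hy : f y * y⁻¹ ∈ F (m + (0, 1))) :
    ∀ n : ℤ, f (y ^ n * x * y ^ (-n)) * (y ^ n * x⁻¹ * y ^ (-n)) ∈ F (m + (1, 0)) := by
  intro n
  have hF : IsCommutatorFiltration_s16 F :=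
    ⟨h10 ▸ Subgroup.normalClosure_normal, h01 ▸ Subgroup.normalClosure_normal, hrec⟩
  have := hF.normal_s16 (a := m + (1, 0)) (by simp)
  have := hF.normal_s16 (a := m + (0, 1)) (by simp)
  have hxF : x ∈ F (1, 0) := h10 ▸ Subgroup.subset_normalClosure rfl
  have hcomm : ⁅F (m + (0, 1)), F (1, 0)⁆ ≤ F (m + (1, 0)) :=
    (Subgroup.commutator_mono (hF.antitone_s16 hm le_self_add) le_rfl).trans
      (hF.commutator_le_s16 hm (by simp))
  rw [map_mul, map_mul, map_zpow, map_zpow, zpow_neg, zpow_neg]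
  exact Subgroup.conj_mul_conj_inv_mem hx <|
    hcomm (Subgroup.commutator_mem_commutator (Subgroup.zpow_inv_mul_zpow_mem hy n) hxF)

/-- if `f` is an automorphism of a group generated by `x, y` with
`f(x)x⁻¹ ∈ F(m+(1,0))` and `f(y)y⁻¹ ∈ F(m+(0,1))`, then
`f(yⁿxy⁻ⁿ)·(yⁿx⁻¹y⁻ⁿ) ∈ F(m+(1,0))` for every integer `n`. -/
theorem statement16 {G : Type*} [Group G] (x y : G)
    (hgen : Subgroup.closure {x, y} = ⊤)
    (F : ℕ × ℕ → Subgroup G)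
    (h10 : F (1, 0) = Subgroup.normalClosure {x})
    (h01 : F (0, 1) = Subgroup.normalClosure {y})
    (hrec : ∀ m : ℕ × ℕ, 2 ≤ m.1 + m.2 →
      F m = ⨆ (q : (ℕ × ℕ) × (ℕ × ℕ)) (_ : q.1 ≠ 0) (_ : q.2 ≠ 0) (_ : q.1 + q.2 = m),
        ⁅F q.1, F q.2⁆)
    (m : ℕ × ℕ) (hm : m ≠ 0)
    (f : G ≃* G)
    (hx : f x * x⁻¹ ∈ F (m + (1, 0)))
    (hy : f y * y⁻¹ ∈ F (m + (0, 1))) :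
    ∀ n : ℤ, f (y ^ n * x * y ^ (-n)) * (y ^ n * x⁻¹ * y ^ (-n)) ∈ F (m + (1, 0)) :=
  statement16_general x y F h10 h01 hrec m hm f hx hy
end
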